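/- arXiv:math/0702127 — 3 statements merged into one kernel-verified Lean document; each statement's English description precedes it below -/
import Mathlib

section
/- Let G be a group, let m ≥ 1, and let φ be an automorphism of G such that g⁻¹φ(g) ∈ γ_m(G) for every g ∈ G. Then for every j ≥ 0 and every c ∈ γ_j(G), one has c⁻¹φ(c) ∈ γ_{j+m}(G). -/
/-!
Fix `j`, put `N = γ_{j+1+m}` and write `φ c = c b`, `φ g = g a` for `c ∈ γ_j`, `g ∈ G`. By induction
`b ∈ γ_{j+m}`, so `b` is central modulo `N`; and `a ∈ γ_m`, so `⁅a, c⁆ ∈ ⁅γ_m, γ_j⁆ ≤ γ_{m+j+1} = N`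
by the three subgroups lemma. Hence `φ ⁅c, g⁆ = ⁅c b, g a⁆ ≡ ⁅c, g⁆` modulo `N`. The elements
fixed by `φ` modulo `N` form a subgroup, which therefore contains `γ_{j+1} = ⁅γ_j, G⁆`.
-/

open scoped commutatorElement

namespace Subgroup

variable {G : Type*} [Group G]

theorem commutator_commutator_le_of_rotate {H₁ H₂ H₃ N : Subgroup G} [N.Normal]
    (h1 : ⁅⁅H₂, H₃⁆, H₁⁆ ≤ N) (h2 : ⁅⁅H₃, H₁⁆, H₂⁆ ≤ N) : ⁅⁅H₁, H₂⁆, H₃⁆ ≤ N := by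
  have le_iff : ∀ A B : Subgroup G,
      ⁅A, B⁆ ≤ N ↔ ⁅A.map (QuotientGroup.mk' N), B.map (QuotientGroup.mk' N)⁆ = ⊥ := fun A B => by
    rw [← map_commutator, map_eq_bot_iff, QuotientGroup.ker_mk']
  rw [le_iff, map_commutator] at h1 h2 ⊢
  exact commutator_commutator_eq_bot_of_rotate h1 h2

theorem commutator_lowerCentralSeries_le (i j : ℕ) :
    ⁅(⊤ : Subgroup G).lowerCentralSeries i, (⊤ : Subgroup G).lowerCentralSeries j⁆ ≤
      (⊤ : Subgroup G).lowerCentralSeries (i + j + 1) := by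
  induction j generalizing i with
  | zero => exact le_rfl
  | succ j ih =>
    rw [lowerCentralSeries_succ, commutator_comm]
    apply commutator_commutator_le_of_rotate
    · rw [commutator_comm ⊤, ← lowerCentralSeries_succ, show i + (j + 1) + 1 = i + 1 + j + 1 by omega]
      exact ih (i + 1)
    · exact commutator_mono (ih i) le_rfl

end Subgroup

section FixedModulo

variable {G : Type*} [Group G]

theorem commutatorElement_mul_mul_eq_of_commute {a b c g : G} (hb : Commute b (g * a))
    (ha : Commute a c) : ⁅c * b, g * a⁆ = ⁅c, g⁆ :=
  calc ⁅c * b, g * a⁆ = c * (b * (g * a)) * b⁻¹ * c⁻¹ * (g * a)⁻¹ := by group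
    _ = c * g * (a * c⁻¹) * a⁻¹ * g⁻¹ := by rw [hb.eq]; group
    _ = ⁅c, g⁆ := by rw [ha.inv_right.eq]; group

theorem QuotientGroup.commute_mk'_of_commutatorElement_mem {N : Subgroup G} [N.Normal] {x y : G}
    (h : ⁅x, y⁆ ∈ N) : Commute (QuotientGroup.mk' N x) (QuotientGroup.mk' N y) := by
  rw [← commutatorElement_eq_one_iff_commute, ← map_commutatorElement, ← MonoidHom.mem_ker,
    QuotientGroup.ker_mk']
  exact h

def fixedModulo (φ : G →* G) (N : Subgroup G) [N.Normal] : Subgroup G :=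
  (QuotientGroup.mk' N).eqLocus ((QuotientGroup.mk' N).comp φ)

theorem mem_fixedModulo {φ : G →* G} {N : Subgroup G} [N.Normal] {x : G} :
    x ∈ fixedModulo φ N ↔ x⁻¹ * φ x ∈ N :=
  QuotientGroup.eq

end FixedModulo

section LowerCentralSeries

variable {G : Type*} [Group G] {φ : G →* G} {m : ℕ}

open Subgroup

theorem lowerCentralSeries_succ_le_fixedModulo
    (hφ : ∀ g : G, g⁻¹ * φ g ∈ (⊤ : Subgroup G).lowerCentralSeries m) {j : ℕ}
    (hj : ∀ c ∈ (⊤ : Subgroup G).lowerCentralSeries j,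
      c⁻¹ * φ c ∈ (⊤ : Subgroup G).lowerCentralSeries (j + m)) :
    (⊤ : Subgroup G).lowerCentralSeries (j + 1) ≤
      fixedModulo φ ((⊤ : Subgroup G).lowerCentralSeries (j + m + 1)) := by
  rw [Subgroup.lowerCentralSeries_succ, commutator_le]
  intro c hc g _
  obtain ⟨b, hb, hφc⟩ : ∃ b ∈ (⊤ : Subgroup G).lowerCentralSeries (j + m), φ c = c * b :=
    ⟨_, hj c hc, (mul_inv_cancel_left c (φ c)).symm⟩
  obtain ⟨a, ha, hφg⟩ : ∃ a ∈ (⊤ : Subgroup G).lowerCentralSeries m, φ g = g * a :=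
    ⟨_, hφ g, (mul_inv_cancel_left g (φ g)).symm⟩
  set f := QuotientGroup.mk' ((⊤ : Subgroup G).lowerCentralSeries (j + m + 1))
  have hb_central : Commute (f b) (f g * f a) := by
    rw [← map_mul]
    exact QuotientGroup.commute_mk'_of_commutatorElement_mem
      (commutator_mem_commutator hb (mem_top _))
  have ha_comm : Commute (f a) (f c) := by
    refine QuotientGroup.commute_mk'_of_commutatorElement_mem ?_
    rw [add_comm j m]
    exact commutator_lowerCentralSeries_le m j (commutator_mem_commutator ha hc)
  change f ⁅c, g⁆ = f (φ ⁅c, g⁆)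
  rw [map_commutatorElement φ, hφc, hφg, map_commutatorElement, map_commutatorElement, map_mul,
    map_mul, commutatorElement_mul_mul_eq_of_commute hb_central ha_comm]

theorem inv_mul_mem_lowerCentralSeries_add
    (hφ : ∀ g : G, g⁻¹ * φ g ∈ (⊤ : Subgroup G).lowerCentralSeries m) :
    ∀ j, ∀ c ∈ (⊤ : Subgroup G).lowerCentralSeries j,
      c⁻¹ * φ c ∈ (⊤ : Subgroup G).lowerCentralSeries (j + m)
  | 0, c, _ => by simpa using hφ c
  | j + 1, _, hc => by
    rw [Nat.add_right_comm]
    exact mem_fixedModulo.mp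
      (lowerCentralSeries_succ_le_fixedModulo hφ (inv_mul_mem_lowerCentralSeries_add hφ j) hc)

end LowerCentralSeries

theorem statement2_general {G : Type*} [Group G] (m : ℕ) (φ : G ≃* G)
    (hφ : ∀ g : G, g⁻¹ * φ g ∈ (⊤ : Subgroup G).lowerCentralSeries m) :
    ∀ j : ℕ, ∀ c ∈ (⊤ : Subgroup G).lowerCentralSeries j, c⁻¹ * φ c ∈ (⊤ : Subgroup G).lowerCentralSeries (j + m) :=
  inv_mul_mem_lowerCentralSeries_add (φ := φ.toMonoidHom) hφ

theorem statement2 {G : Type*} [Group G] (m : ℕ) (hm : 1 ≤ m) (φ : G ≃* G)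
    (hφ : ∀ g : G, g⁻¹ * φ g ∈ (⊤ : Subgroup G).lowerCentralSeries m) :
    ∀ j : ℕ, ∀ c ∈ (⊤ : Subgroup G).lowerCentralSeries j, c⁻¹ * φ c ∈ (⊤ : Subgroup G).lowerCentralSeries (j + m) :=
  statement2_general m φ hφ
end

section
/- Let F be a finitely generated free group and let m ≥ 1. Since γ_{m-1}(F/γ_m(F)) = γ_{m-1}(F)/γ_m(F) and lower central subgroups are characteristic, the identification F/γ_{m-1}(F) ≅ (F/γ_m(F))/γ_{m-1}(F/γ_m(F)) induces a natural group homomorphism Aut(F/γ_m(F)) → Aut(F/γ_{m-1}(F)). This homomorphism is surjective: every automorphism of F/γ_{m-1}(F) lifts to an automorphism of F/γ_m(F). -/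
/-!
Lift `ψ` and `ψ⁻¹` to endomorphisms `θ₀`, `θ₁` of `G = F/γ_m(F)`: this is possible because `F`
is free and `γ_m(G) = 1`, so any homomorphism `F → G` kills `γ_m(F)`. Both composites of `θ₀`
and `θ₁` are the identity modulo `γ_{m-1}(G)`, which is central and, for `m ≥ 2`, contained in
`[G, G]` (for `m ≤ 1` the target group is trivial). For an endomorphism `σ` with central
displacement, `x ↦ x⁻¹ σ(x)` is a homomorphism to an abelian group, so it kills `[G, G]` and in
particular its own values; hence `y ↦ y (y⁻¹ σ(y))⁻¹` inverts `σ`, and `θ₀` is an automorphism.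
-/

namespace Subgroup

theorem map_lowerCentralSeries_top_of_surjective {G H : Type*} [Group G] [Group H] {f : G →* H}
    (hf : Function.Surjective f) (n : ℕ) :
    (lowerCentralSeries (⊤ : Subgroup G) n).map f = lowerCentralSeries (⊤ : Subgroup H) n := by
  rw [map_lowerCentralSeries, map_top_of_surjective f hf]

theorem lowerCentralSeries_quotient_lowerCentralSeries_eq_bot (G : Type*) [Group G] (n : ℕ) :
    lowerCentralSeries (⊤ : Subgroup (G ⧸ lowerCentralSeries (⊤ : Subgroup G) n)) n = ⊥ := by
  rw [← map_lowerCentralSeries_top_of_surjective (QuotientGroup.mk'_surjective _), map_eq_bot_iff,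
    QuotientGroup.ker_mk']

theorem lowerCentralSeries_le_center_of_succ_eq_bot {G : Type*} [Group G] {n : ℕ}
    (h : lowerCentralSeries (⊤ : Subgroup G) (n + 1) = ⊥) :
    lowerCentralSeries (⊤ : Subgroup G) n ≤ center G :=
  commutator_top_right_eq_bot_iff_le_center.mp h

end Subgroup

namespace MonoidHom

open scoped IsMulCommutative

variable {G : Type*} [Group G]

def centralDisplacement (σ : G →* G) (hσ : ∀ x, x⁻¹ * σ x ∈ Subgroup.center G) :
    G →* Subgroup.center G where
  toFun x := ⟨x⁻¹ * σ x, hσ x⟩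
  map_one' := by simp
  map_mul' x y := by
    have hcomm : y⁻¹ * (x⁻¹ * σ x) = x⁻¹ * σ x * y⁻¹ := Subgroup.mem_center_iff.mp (hσ x) y⁻¹
    ext
    calc (x * y)⁻¹ * σ (x * y) = y⁻¹ * (x⁻¹ * σ x) * σ y := by simp only [map_mul]; group
      _ = x⁻¹ * σ x * (y⁻¹ * σ y) := by rw [hcomm]; group

theorem bijective_of_inv_mul_mem_center_inf_commutator (σ : G →* G)
    (hσ : ∀ x, x⁻¹ * σ x ∈ Subgroup.center G ⊓ commutator G) : Function.Bijective σ := by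
  set c := σ.centralDisplacement fun x => (hσ x).1
  have hσc : ∀ x, σ x = x * c x := fun x => by simp [c, centralDisplacement]
  have hcc : ∀ x, c (c x) = 1 := fun x => Abelianization.commutator_subset_ker c (hσ x).2
  refine Function.bijective_iff_has_inverse.mpr ⟨fun y => y * (c y : G)⁻¹, fun x => ?_, fun y => ?_⟩
  · have hcσ : c (σ x) = c x := by rw [hσc, map_mul, hcc, mul_one]
    show σ x * (c (σ x) : G)⁻¹ = x
    rw [hcσ, hσc, mul_inv_cancel_right]
  · simp only [hσc, map_mul, map_inv, hcc, inv_one, mul_one, inv_mul_cancel_right]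

end MonoidHom

theorem FreeGroup.exists_comp_eq_of_surjective {α H Q : Type*} [Group H] [Group Q] {p : H →* Q}
    (hp : Function.Surjective p) (g : FreeGroup α →* Q) : ∃ f : FreeGroup α →* H, p.comp f = g := by
  choose w hw using fun a => hp (g (of a))
  exact ⟨lift w, ext_hom _ _ fun a => by simp [hw]⟩

section LowerCentralQuotient

variable {G : Type*} [Group G] {n k : ℕ}
  (π : G ⧸ Subgroup.lowerCentralSeries (⊤ : Subgroup G) n →*
    G ⧸ Subgroup.lowerCentralSeries (⊤ : Subgroup G) k)
  (hπ : ∀ x : G, π (QuotientGroup.mk x) = QuotientGroup.mk x)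
include hπ

theorem ker_le_lowerCentralSeries_of_comp_mk_eq_mk : π.ker ≤ Subgroup.lowerCentralSeries ⊤ k := by
  intro y hy
  obtain ⟨x, rfl⟩ := QuotientGroup.mk_surjective y
  rw [MonoidHom.mem_ker, hπ, QuotientGroup.eq_one_iff] at hy
  rw [← Subgroup.map_lowerCentralSeries_top_of_surjective (QuotientGroup.mk'_surjective _)]
  exact Subgroup.mem_map_of_mem _ hy

theorem bijective_of_comp_eq_self_of_comp_mk_eq_mk (hk : 1 ≤ k) (hnk : n ≤ k + 1)
    (σ : G ⧸ Subgroup.lowerCentralSeries (⊤ : Subgroup G) n →*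
      G ⧸ Subgroup.lowerCentralSeries (⊤ : Subgroup G) n)
    (hσ : ∀ y, π (σ y) = π y) : Function.Bijective σ := by
  have hγ_center : Subgroup.lowerCentralSeries ⊤ k ≤
      Subgroup.center (G ⧸ Subgroup.lowerCentralSeries (⊤ : Subgroup G) n) :=
    Subgroup.lowerCentralSeries_le_center_of_succ_eq_bot <| eq_bot_iff.mpr <|
      (Subgroup.lowerCentralSeries_antitone _ hnk).trans
        (Subgroup.lowerCentralSeries_quotient_lowerCentralSeries_eq_bot G n).le
  have hγ_commutator : Subgroup.lowerCentralSeries ⊤ k ≤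
      commutator (G ⧸ Subgroup.lowerCentralSeries (⊤ : Subgroup G) n) :=
    Subgroup.lowerCentralSeries_antitone _ hk
  refine σ.bijective_of_inv_mul_mem_center_inf_commutator fun y =>
    le_inf hγ_center hγ_commutator (ker_le_lowerCentralSeries_of_comp_mk_eq_mk π hπ ?_)
  rw [MonoidHom.mem_ker, map_mul, map_inv, hσ, inv_mul_cancel]

end LowerCentralQuotient

section FreeLowerCentralQuotient

variable {α : Type*} {n k : ℕ}
  (π : FreeGroup α ⧸ Subgroup.lowerCentralSeries (⊤ : Subgroup (FreeGroup α)) n →*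
    FreeGroup α ⧸ Subgroup.lowerCentralSeries (⊤ : Subgroup (FreeGroup α)) k)
  (hπ : ∀ x : FreeGroup α, π (QuotientGroup.mk x) = QuotientGroup.mk x)
include hπ

theorem exists_lift_monoidHom_of_comp_mk_eq_mk
    (ψ : FreeGroup α ⧸ Subgroup.lowerCentralSeries (⊤ : Subgroup (FreeGroup α)) k →*
      FreeGroup α ⧸ Subgroup.lowerCentralSeries (⊤ : Subgroup (FreeGroup α)) k) :
    ∃ θ : FreeGroup α ⧸ Subgroup.lowerCentralSeries (⊤ : Subgroup (FreeGroup α)) n →*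
      FreeGroup α ⧸ Subgroup.lowerCentralSeries (⊤ : Subgroup (FreeGroup α)) n,
      ∀ y, π (θ y) = ψ (π y) := by
  have hπ_surj : Function.Surjective π := fun z => by
    obtain ⟨x, rfl⟩ := QuotientGroup.mk_surjective z
    exact ⟨_, hπ x⟩
  obtain ⟨f, hf⟩ := FreeGroup.exists_comp_eq_of_surjective hπ_surj (ψ.comp (QuotientGroup.mk' _))
  have hker : Subgroup.lowerCentralSeries ⊤ n ≤ f.ker := by
    rw [← Subgroup.map_eq_bot_iff, eq_bot_iff,
      ← Subgroup.lowerCentralSeries_quotient_lowerCentralSeries_eq_bot (FreeGroup α) n,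
      Subgroup.map_lowerCentralSeries]
    exact Subgroup.lowerCentralSeries_mono n le_top
  refine ⟨QuotientGroup.lift _ f hker, fun y => ?_⟩
  obtain ⟨x, rfl⟩ := QuotientGroup.mk_surjective y
  rw [QuotientGroup.lift_mk, hπ, ← MonoidHom.comp_apply, hf]
  rfl

theorem exists_lift_mulEquiv_of_comp_mk_eq_mk (hk : 1 ≤ k) (hnk : n ≤ k + 1)
    (ψ : FreeGroup α ⧸ Subgroup.lowerCentralSeries (⊤ : Subgroup (FreeGroup α)) k ≃*
      FreeGroup α ⧸ Subgroup.lowerCentralSeries (⊤ : Subgroup (FreeGroup α)) k) :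
    ∃ θ : FreeGroup α ⧸ Subgroup.lowerCentralSeries (⊤ : Subgroup (FreeGroup α)) n ≃*
      FreeGroup α ⧸ Subgroup.lowerCentralSeries (⊤ : Subgroup (FreeGroup α)) n,
      ∀ y, π (θ y) = ψ (π y) := by
  obtain ⟨θ₀, hθ₀⟩ := exists_lift_monoidHom_of_comp_mk_eq_mk π hπ ψ.toMonoidHom
  obtain ⟨θ₁, hθ₁⟩ := exists_lift_monoidHom_of_comp_mk_eq_mk π hπ ψ.symm.toMonoidHom
  have h₁₀ := bijective_of_comp_eq_self_of_comp_mk_eq_mk π hπ hk hnk (θ₁.comp θ₀)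
    fun y => by simp [hθ₀, hθ₁]
  have h₀₁ := bijective_of_comp_eq_self_of_comp_mk_eq_mk π hπ hk hnk (θ₀.comp θ₁)
    fun y => by simp [hθ₀, hθ₁]
  rw [MonoidHom.coe_comp] at h₁₀ h₀₁
  exact ⟨MulEquiv.ofBijective θ₀ ⟨h₁₀.1.of_comp, h₀₁.2.of_comp⟩, hθ₀⟩

end FreeLowerCentralQuotient

theorem statement5_general {α : Type*} (m : ℕ)
    (π : (FreeGroup α ⧸ Subgroup.lowerCentralSeries (⊤ : Subgroup (FreeGroup α)) m) →*
         (FreeGroup α ⧸ Subgroup.lowerCentralSeries (⊤ : Subgroup (FreeGroup α)) (m - 1)))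
    (hπ : ∀ x : FreeGroup α, π (QuotientGroup.mk x) = QuotientGroup.mk x)
    (ψ : (FreeGroup α ⧸ Subgroup.lowerCentralSeries (⊤ : Subgroup (FreeGroup α)) (m - 1)) ≃*
         (FreeGroup α ⧸ Subgroup.lowerCentralSeries (⊤ : Subgroup (FreeGroup α)) (m - 1))) :
    ∃ θ : (FreeGroup α ⧸ Subgroup.lowerCentralSeries (⊤ : Subgroup (FreeGroup α)) m) ≃*
          (FreeGroup α ⧸ Subgroup.lowerCentralSeries (⊤ : Subgroup (FreeGroup α)) m),
      ∀ x : FreeGroup α ⧸ Subgroup.lowerCentralSeries (⊤ : Subgroup (FreeGroup α)) m, π (θ x) = ψ (π x) := by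
  rcases Nat.eq_zero_or_pos (m - 1) with hm | hm
  · have : Subsingleton
        (FreeGroup α ⧸ Subgroup.lowerCentralSeries (⊤ : Subgroup (FreeGroup α)) (m - 1)) := by
      rw [hm]
      exact QuotientGroup.subsingleton_quotient_top
    exact ⟨MulEquiv.refl _, fun _ => Subsingleton.elim _ _⟩
  · exact exists_lift_mulEquiv_of_comp_mk_eq_mk π hπ hm (by omega) ψ

theorem statement5 {α : Type*} [Finite α] (m : ℕ) (hm : 1 ≤ m)
    (π : (FreeGroup α ⧸ Subgroup.lowerCentralSeries (⊤ : Subgroup (FreeGroup α)) m) →*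
         (FreeGroup α ⧸ Subgroup.lowerCentralSeries (⊤ : Subgroup (FreeGroup α)) (m - 1)))
    (hπ : ∀ x : FreeGroup α, π (QuotientGroup.mk x) = QuotientGroup.mk x)
    (ψ : (FreeGroup α ⧸ Subgroup.lowerCentralSeries (⊤ : Subgroup (FreeGroup α)) (m - 1)) ≃*
         (FreeGroup α ⧸ Subgroup.lowerCentralSeries (⊤ : Subgroup (FreeGroup α)) (m - 1))) :
    ∃ θ : (FreeGroup α ⧸ Subgroup.lowerCentralSeries (⊤ : Subgroup (FreeGroup α)) m) ≃*
          (FreeGroup α ⧸ Subgroup.lowerCentralSeries (⊤ : Subgroup (FreeGroup α)) m),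
      ∀ x : FreeGroup α ⧸ Subgroup.lowerCentralSeries (⊤ : Subgroup (FreeGroup α)) m, π (θ x) = ψ (π x) :=
  statement5_general m π hπ ψ
end

section
/- Let K be a field, let V and W be vector spaces over K, and let p : V → W be a surjective linear map. Then the kernel of the induced linear map ⋀³V → ⋀³W on third exterior powers equals the subspace of ⋀³V spanned by the elements u ∧ v ∧ w with u ∈ ker p and v, w ∈ V. -/
open ExteriorAlgebra

/-!
STATEMENT 15: Let `K` be a field, `V`, `W` vector spaces over `K`, and `p : V → W` a
surjective linear map.  Then the kernel of the induced linear map `⋀³V → ⋀³W` on third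
exterior powers equals the subspace of `⋀³V` spanned by the elements `u ∧ v ∧ w` with
`u ∈ ker p` and `v, w ∈ V`.

Here `⋀³V = ⋀[K]^3 V` is realized as a submodule of the exterior algebra of `V`; the
induced map is the restriction of `ExteriorAlgebra.map p` (which sends
`v₁ ∧ v₂ ∧ v₃ = ι v₁ * ι v₂ * ι v₃` to `p v₁ ∧ p v₂ ∧ p v₃` and maps `⋀³V` into
`⋀³W`), so its kernel is `ker (ExteriorAlgebra.map p) ⊓ ⋀[K]^3 V`; both sides of the
asserted equality are submodules of the exterior algebra contained in `⋀[K]^3 V`.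
-/
theorem statement15 {K V W : Type*} [Field K] [AddCommGroup V] [Module K V]
    [AddCommGroup W] [Module K W] (p : V →ₗ[K] W) (hp : Function.Surjective p) :
    LinearMap.ker (ExteriorAlgebra.map p).toLinearMap ⊓ (⋀[K]^3 V) =
      Submodule.span K
        {x : ExteriorAlgebra K V | ∃ u v w : V, u ∈ LinearMap.ker p ∧
          x = ExteriorAlgebra.ι K u * ExteriorAlgebra.ι K v * ExteriorAlgebra.ι K w} := by
  set S := Submodule.span K
        {x : ExteriorAlgebra K V | ∃ u v w : V, u ∈ LinearMap.ker p ∧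
          x = ExteriorAlgebra.ι K u * ExteriorAlgebra.ι K v * ExteriorAlgebra.ι K w} with hS
  -- anticommutativity helper
  have swap : ∀ a b : V, ι K a * ι K b = -(ι K b * ι K a) := by
    intro a b
    exact eq_neg_of_add_eq_zero_left (ι_add_mul_swap a b)
  -- generators with kernel element in any slot are in S
  have mem1 : ∀ u v w : V, u ∈ LinearMap.ker p → ι K u * ι K v * ι K w ∈ S := by
    intro u v w hu
    exact Submodule.subset_span ⟨u, v, w, hu, rfl⟩
  have mem2 : ∀ v u w : V, u ∈ LinearMap.ker p → ι K v * ι K u * ι K w ∈ S := by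
    intro v u w hu
    have : ι K v * ι K u * ι K w = -(ι K u * ι K v * ι K w) := by
      rw [swap v u, neg_mul]
    rw [this]
    exact Submodule.neg_mem _ (mem1 u v w hu)
  have mem3 : ∀ v w u : V, u ∈ LinearMap.ker p → ι K v * ι K w * ι K u ∈ S := by
    intro v w u hu
    have : ι K v * ι K w * ι K u = ι K u * ι K v * ι K w := by
      rw [mul_assoc, swap w u, mul_neg, ← mul_assoc, swap v u, neg_mul, neg_neg]
    rw [this]
    exact mem1 u v w hu
  -- choose a section s of p
  obtain ⟨s, hs⟩ := p.exists_rightInverse_of_surjective (LinearMap.range_eq_top.2 hp)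
  set q : V →ₗ[K] V := s.comp p with hq
  have hpq : ∀ v : V, p (q v) = p v := fun v => by
    have := congrArg (fun f : W →ₗ[K] W => f (p v)) hs
    simpa [hq] using this
  have hker : ∀ v : V, v - q v ∈ LinearMap.ker p := fun v => by
    simp [LinearMap.mem_ker, map_sub, hpq]
  -- key: for x ∈ ⋀³V, x - map q x ∈ S
  have key : ∀ x ∈ (⋀[K]^3 V), x - ExteriorAlgebra.map q x ∈ S := by
    intro x hx
    rw [← ιMulti_span_fixedDegree] at hx
    induction hx using Submodule.span_induction with
    | mem y hy =>
      obtain ⟨f, rfl⟩ := hy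
      have hf : ιMulti K 3 f = ι K (f 0) * ι K (f 1) * ι K (f 2) := by
        simp only [ιMulti_apply, List.ofFn_succ, List.ofFn_zero, List.prod_cons,
          List.prod_nil, mul_one, mul_assoc]
        rfl
      rw [hf, map_mul, map_mul, map_apply_ι, map_apply_ι, map_apply_ι]
      set a := f 0; set b := f 1; set c := f 2
      have expand : ι K a * ι K b * ι K c - ι K (q a) * ι K (q b) * ι K (q c)
          = ι K (a - q a) * ι K b * ι K c
            + ι K (q a) * ι K (b - q b) * ι K c
            + ι K (q a) * ι K (q b) * ι K (c - q c) := by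
        simp only [map_sub]
        noncomm_ring
      rw [expand]
      exact Submodule.add_mem _
        (Submodule.add_mem _ (mem1 _ _ _ (hker a)) (mem2 _ _ _ (hker b)))
        (mem3 _ _ _ (hker c))
    | zero => simpa using Submodule.zero_mem S
    | add y z _ _ hy hz =>
      have : y + z - ExteriorAlgebra.map q (y + z)
          = (y - ExteriorAlgebra.map q y) + (z - ExteriorAlgebra.map q z) := by
        rw [map_add]; abel
      rw [this]; exact Submodule.add_mem _ hy hz
    | smul c y _ hy =>
      have : c • y - ExteriorAlgebra.map q (c • y)
          = c • (y - ExteriorAlgebra.map q y) := by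
        rw [map_smul, smul_sub]
      rw [this]; exact Submodule.smul_mem _ _ hy
  apply le_antisymm
  · rintro x ⟨hx1, hx2⟩
    have h0 : ExteriorAlgebra.map q x = 0 := by
      have : ExteriorAlgebra.map q x
          = ExteriorAlgebra.map s (ExteriorAlgebra.map p x) := by
        rw [← AlgHom.comp_apply, map_comp_map]
      rw [this]
      have : ExteriorAlgebra.map p x = 0 := hx1
      rw [this, map_zero]
    have := key x hx2
    rwa [h0, sub_zero] at this
  · rw [hS, Submodule.span_le]
    rintro x ⟨u, v, w, hu, rfl⟩
    refine Submodule.mem_inf.mpr ⟨LinearMap.mem_ker.mpr ?_, ?_⟩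
    · show ExteriorAlgebra.map p (ι K u * ι K v * ι K w) = 0
      rw [map_mul, map_mul, map_apply_ι, LinearMap.mem_ker.mp hu, map_zero,
        zero_mul, zero_mul]
    · have hf : ιMulti K 3 ![u, v, w] = ι K u * ι K v * ι K w := by
        simp only [ιMulti_apply, List.ofFn_succ, List.ofFn_zero, List.prod_cons,
          List.prod_nil, mul_one, mul_assoc]
        rfl
      rw [← hf]
      exact ιMulti_range K 3 (Set.mem_range_self _)
end
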